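/- arXiv:1411.2275 — 4 statements merged into one kernel-verified Lean document; each statement's English description precedes it below -/
import Mathlib

section
/- A finite poset whose precedence (Hasse) diagram, viewed as an undirected graph, is a forest, and which is also a lattice, must be a chain (totally ordered set). -/
/-!
If `x` and `y` were incomparable, going up the Hasse diagram from `x ⊓ y` to `x` and on to `x ⊔ y`
would give a path between `x ⊓ y` and `x ⊔ y` all of whose vertices are comparable with `x`, and
similarly one through `y`. In a forest these two paths coincide, so `x` would be comparable with `y`.
-/

namespace SimpleGraph

lemma fromRel_covBy_eq_hasse (α : Type*) [Preorder α] :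
    fromRel (fun x y : α => x ⋖ y) = hasse α := by
  ext a b
  simp only [fromRel_adj, hasse_adj, and_iff_right_iff_imp]
  rintro (h | h)
  exacts [h.ne, h.ne']

lemma Walk.IsPath.append {V : Type*} {G : SimpleGraph V} {u v w : V} {p : G.Walk u v}
    {q : G.Walk v w} (hp : p.IsPath) (hq : q.IsPath)
    (hpq : ∀ x ∈ p.support, x ∈ q.support → x = v) : (p.append q).IsPath := by
  have hq' := hq.support_nodup
  rw [← cons_tail_support, List.nodup_cons] at hq'
  rw [isPath_def, support_append, List.nodup_append]
  refine ⟨hp.support_nodup, hq'.2, ?_⟩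
  rintro x hxp _ hxq rfl
  exact hq'.1 (hpq x hxp (List.mem_of_mem_tail hxq) ▸ hxq)

variable {α : Type*} [PartialOrder α] [IsStronglyAtomic α] [WellFoundedGT α]

lemma exists_hasse_walk_support_subset_Icc {a b : α} (hab : a ≤ b) :
    ∃ p : (hasse α).Walk a b, ∀ v ∈ p.support, v ∈ Set.Icc a b := by
  induction a using WellFoundedGT.induction with
  | _ a ih =>
  obtain rfl | hlt := hab.eq_or_lt
  · exact ⟨.nil, by simp⟩
  obtain ⟨c, hac, hcb⟩ := exists_covBy_le_of_lt hlt
  obtain ⟨p, hp⟩ := ih c hac.lt hcb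
  refine ⟨.cons (hasse_adj.2 (.inl hac)) p, ?_⟩
  simp only [Walk.support_cons, List.forall_mem_cons]
  exact ⟨⟨le_rfl, hab⟩, fun v hv => ⟨hac.le.trans (hp v hv).1, (hp v hv).2⟩⟩

lemma exists_hasse_path_support_subset_Icc {a b : α} (hab : a ≤ b) :
    ∃ p : (hasse α).Walk a b, p.IsPath ∧ ∀ v ∈ p.support, v ∈ Set.Icc a b := by
  classical
  obtain ⟨p, hp⟩ := exists_hasse_walk_support_subset_Icc hab
  exact ⟨p.bypass, p.bypass_isPath, fun v hv => hp v (p.support_bypass_subset_support hv)⟩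

lemma exists_hasse_path_through {a b z : α} (haz : a ≤ z) (hzb : z ≤ b) :
    ∃ p : (hasse α).Path a b, z ∈ p.1.support ∧ ∀ v ∈ p.1.support, v ≤ z ∨ z ≤ v := by
  obtain ⟨p, hp, hpIcc⟩ := exists_hasse_path_support_subset_Icc haz
  obtain ⟨q, hq, hqIcc⟩ := exists_hasse_path_support_subset_Icc hzb
  have hpq : ∀ x ∈ p.support, x ∈ q.support → x = z := fun x hxp hxq =>
    le_antisymm (hpIcc x hxp).2 (hqIcc x hxq).1
  refine ⟨⟨p.append q, hp.append hq hpq⟩,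
    (Walk.mem_support_append_iff _ _).2 (.inl p.end_mem_support), fun v hv => ?_⟩
  rcases (Walk.mem_support_append_iff _ _).1 hv with hv | hv
  exacts [.inl (hpIcc v hv).2, .inr (hqIcc v hv).1]

end SimpleGraph

open SimpleGraph in
theorem forest_lattice_is_chain
    {α : Type*} [Fintype α] [Lattice α]
    (hforest : (SimpleGraph.fromRel (fun x y : α => x ⋖ y)).IsAcyclic) :
    ∀ x y : α, x ≤ y ∨ y ≤ x := by
  rw [fromRel_covBy_eq_hasse] at hforest
  intro x y
  obtain ⟨p, -, hp⟩ := exists_hasse_path_through (inf_le_right : x ⊓ y ≤ y) le_sup_right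
  obtain ⟨q, hxq, -⟩ := exists_hasse_path_through (inf_le_left : x ⊓ y ≤ x) le_sup_left
  rw [(hforest.subsingleton_path _ _).elim q p] at hxq
  exact hp x hxq
end

section
/- Termination/completeness criterion for the joint-generation procedure: let P be a finite poset, X a set of minimal t-infrequent elements and Y a set of maximal t-frequent elements. If every element of P lies either above some element of X or below some element of Y (i.e. X⁺ ∪ Y⁻ = P), then X is the set of ALL minimal t-infrequent elements and Y is the set of ALL maximal t-frequent elements. -/
/-! The support count `p ↦ #{q ∈ D | p ≤ q}` is antitone, so being `t`-infrequent is an upward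
closed property and being `t`-frequent its downward closed negation. A minimal infrequent `a` lies
above some `x ∈ X`, and then `x = a` by minimality, or below some `y ∈ Y`, which would make the
frequent `y` infrequent. Dually for the maximal frequent elements. -/

open Finset

section Covering

variable {α : Type*} [PartialOrder α] {P : α → Prop} {X Y : Set α}

theorem eq_setOf_minimal_of_covers (hP : Monotone P) (hX : ∀ a ∈ X, Minimal P a)
    (hY : ∀ b ∈ Y, ¬P b) (hcover : ∀ p, (∃ a ∈ X, a ≤ p) ∨ ∃ b ∈ Y, p ≤ b) :
    X = {a | Minimal P a} := by
  refine Set.Subset.antisymm hX fun a ha => ?_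
  obtain ⟨x, hx, hxa⟩ | ⟨b, hb, hab⟩ := hcover a
  · rwa [ha.eq_of_le (hX x hx).prop hxa] at hx
  · exact absurd (hP hab ha.prop) (hY b hb)

theorem eq_setOf_maximal_of_covers (hP : Antitone P) (hY : ∀ b ∈ Y, Maximal P b)
    (hX : ∀ a ∈ X, ¬P a) (hcover : ∀ p, (∃ a ∈ X, a ≤ p) ∨ ∃ b ∈ Y, p ≤ b) :
    Y = {b | Maximal P b} :=
  eq_setOf_minimal_of_covers (α := αᵒᵈ) hP.dual_left hY hX fun p => (hcover p).symm

theorem minimal_apply_lt_iff {β : Type*} [LinearOrder β] {s : α → β} {t : β} {a : α} :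
    Minimal (fun p => s p < t) a ↔ s a < t ∧ ∀ p, p < a → t ≤ s p := by
  simp [minimal_iff_forall_lt]

theorem maximal_le_apply_iff {β : Type*} [LinearOrder β] {s : α → β} {t : β} {b : α} :
    Maximal (fun p => t ≤ s p) b ↔ t ≤ s b ∧ ∀ p, b < p → s p < t := by
  simp [maximal_iff_forall_gt]

end Covering

theorem antitone_card_filter_le {α : Type*} [Preorder α] [DecidableRel ((· ≤ ·) : α → α → Prop)]
    (D : Finset α) : Antitone fun p => (D.filter fun q => p ≤ q).card :=
  fun _ _ hpq => card_le_card <| monotone_filter_right D fun _ _ => hpq.trans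

theorem joint_generation_completeness_general
    {α : Type*} [PartialOrder α]
    [DecidableRel ((· ≤ ·) : α → α → Prop)]
    (D : Finset α) (t : ℕ) (X Y : Set α)
    (hX : ∀ a ∈ X, (D.filter fun q => a ≤ q).card < t ∧
        ∀ p, p < a → t ≤ (D.filter fun q => p ≤ q).card)
    (hY : ∀ b ∈ Y, t ≤ (D.filter fun q => b ≤ q).card ∧
        ∀ p, b < p → (D.filter fun q => p ≤ q).card < t)
    (hcover : ∀ p : α, (∃ a ∈ X, a ≤ p) ∨ (∃ b ∈ Y, p ≤ b)) :
    X = {a : α | (D.filter fun q => a ≤ q).card < t ∧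
          ∀ p, p < a → t ≤ (D.filter fun q => p ≤ q).card} ∧
    Y = {b : α | t ≤ (D.filter fun q => b ≤ q).card ∧
          ∀ p, b < p → (D.filter fun q => p ≤ q).card < t} := by
  have hs := antitone_card_filter_le D
  have hmin := eq_setOf_minimal_of_covers (fun _ _ hpq hp => (hs hpq).trans_lt hp)
    (fun a ha => minimal_apply_lt_iff.2 (hX a ha)) (fun b hb => (hY b hb).1.not_gt) hcover
  have hmax := eq_setOf_maximal_of_covers (fun _ _ hpq hp => hp.trans (hs hpq))
    (fun b hb => maximal_le_apply_iff.2 (hY b hb)) (fun a ha => (hX a ha).1.not_ge) hcover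
  simp only [minimal_apply_lt_iff, maximal_le_apply_iff] at hmin hmax
  exact ⟨hmin, hmax⟩

theorem joint_generation_completeness
    {α : Type*} [PartialOrder α] [Fintype α]
    [DecidableRel ((· ≤ ·) : α → α → Prop)]
    (D : Finset α) (t : ℕ) (X Y : Set α)
    (hX : ∀ a ∈ X, (D.filter fun q => a ≤ q).card < t ∧
        ∀ p, p < a → t ≤ (D.filter fun q => p ≤ q).card)
    (hY : ∀ b ∈ Y, t ≤ (D.filter fun q => b ≤ q).card ∧
        ∀ p, b < p → (D.filter fun q => p ≤ q).card < t)
    (hcover : ∀ p : α, (∃ a ∈ X, a ≤ p) ∨ (∃ b ∈ Y, p ≤ b)) :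
    X = {a : α | (D.filter fun q => a ≤ q).card < t ∧
          ∀ p, p < a → t ≤ (D.filter fun q => p ≤ q).card} ∧
    Y = {b : α | t ≤ (D.filter fun q => b ≤ q).card ∧
          ∀ p, b < p → (D.filter fun q => p ≤ q).card < t} :=
  joint_generation_completeness_general D t X Y hX hY hcover
end

section
/- Maximal empty boxes have point-determined coordinates: let S be a finite set of points in ℝⁿ contained in the interior of a bounded box D = [l, u], and let B = [a, b] ⊆ D be a box containing no point of S in its interior and maximal with this property among boxes contained in D. Then for each coordinate i, a_i ∈ {l_i} ∪ {p_i : p ∈ S} and b_i ∈ {u_i} ∪ {p_i : p ∈ S}. -/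
/-!
Push the lower face `a i` of `B` down a little, to a level `y` below which no point of `S` has
its `i`-th coordinate in `(y, a i)`; finiteness of `S` makes such a gap exist. Maximality puts
a point `p` of `S` inside the enlarged box, and emptiness of `B` forces `p i ≤ a i`, so the gap
leaves only `p i = a i`. The upper face is the same argument in the dual order.
-/

open Function

theorem Finset.exists_le_lt_forall_notMem_Ioo {α : Type*} [LinearOrder α] (T : Finset α)
    {l x : α} (hlx : l < x) : ∃ y, l ≤ y ∧ y < x ∧ ∀ t ∈ T, t ∉ Set.Ioo y x := by
  have hne : (insert l (T.filter (· < x))).Nonempty := insert_nonempty _ _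
  refine ⟨_, le_max' _ l (mem_insert_self l (T.filter (· < x))), ?_, fun t ht hmt => ?_⟩
  · obtain hm | hm := mem_insert.1 (max'_mem _ hne)
    · exact hm.le.trans_lt hlx
    · exact (mem_filter.1 hm).2
  · exact hmt.1.not_ge (le_max' _ _ (mem_insert_of_mem (mem_filter.2 ⟨ht, hmt.2⟩)))

section MaximalEmptyBox

variable {ι α : Type*} [DecidableEq ι] [LinearOrder α] (S : Finset (ι → α)) (l a b : ι → α)

theorem lower_eq_or_exists_coord_eq_of_maximal (hBl : ∀ i, l i ≤ a i)
    (hempty : ¬ ∃ p ∈ S, ∀ i, a i < p i ∧ p i < b i)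
    (hmax : ∀ a' : ι → α, (∀ i, l i ≤ a' i) → (∀ i, a' i ≤ a i) → a' ≠ a →
      ∃ p ∈ S, ∀ i, a' i < p i ∧ p i < b i)
    (i : ι) : a i = l i ∨ ∃ p ∈ S, p i = a i := by
  obtain heq | hlt := (hBl i).eq_or_lt
  · exact Or.inl heq.symm
  obtain ⟨y, hly, hya, hgap⟩ := (S.image (· i)).exists_le_lt_forall_notMem_Ioo hlt
  obtain ⟨p, hp, hpB⟩ := hmax (update a i y) (le_update_iff.2 ⟨hly, fun j _ => hBl j⟩)
    (update_le_self_iff.2 hya.le) (update_ne_self_iff.2 hya.ne)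
  have hyp : y < p i := by simpa using (hpB i).1
  have hpa : p i ≤ a i := by
    by_contra! hap
    refine hempty ⟨p, hp, fun j => ?_⟩
    obtain rfl | hj := eq_or_ne j i
    · exact ⟨hap, (hpB j).2⟩
    · simpa [hj] using hpB j
  exact Or.inr ⟨p, hp, hpa.eq_of_not_lt fun hpa' =>
    hgap _ (Finset.mem_image_of_mem _ hp) ⟨hyp, hpa'⟩⟩

theorem upper_eq_or_exists_coord_eq_of_maximal (u : ι → α) (hBu : ∀ i, b i ≤ u i)
    (hempty : ¬ ∃ p ∈ S, ∀ i, a i < p i ∧ p i < b i)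
    (hmax : ∀ b' : ι → α, (∀ i, b' i ≤ u i) → (∀ i, b i ≤ b' i) → b' ≠ b →
      ∃ p ∈ S, ∀ i, a i < p i ∧ p i < b' i)
    (i : ι) : b i = u i ∨ ∃ p ∈ S, p i = b i :=
  lower_eq_or_exists_coord_eq_of_maximal (α := αᵒᵈ) S u b a hBu
    (fun ⟨p, hp, hpB⟩ => hempty ⟨p, hp, fun j => (hpB j).symm⟩)
    (fun b' hb'u hbb' hb' => (hmax b' hb'u hbb' hb').imp fun _ ⟨hp, hpB⟩ =>
      ⟨hp, fun j => (hpB j).symm⟩) i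

end MaximalEmptyBox

theorem maximal_empty_box_coordinates_general
    {n : ℕ} (S : Finset (Fin n → ℝ)) (l u a b : Fin n → ℝ)
    -- B = [a, b] is contained in D:
    (hBl : ∀ i, l i ≤ a i) (hBu : ∀ i, b i ≤ u i)
    -- the interior of B contains no point of S:
    (hempty : ¬ ∃ p ∈ S, ∀ i, a i < p i ∧ p i < b i)
    -- maximality: any strictly larger box inside D has a point of S in its interior:
    (hmax : ∀ a' b' : Fin n → ℝ, (∀ i, l i ≤ a' i) → (∀ i, b' i ≤ u i) →
        (∀ i, a' i ≤ a i) → (∀ i, b i ≤ b' i) → (a' ≠ a ∨ b' ≠ b) →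
        ∃ p ∈ S, ∀ i, a' i < p i ∧ p i < b' i) :
    ∀ i : Fin n, (a i = l i ∨ ∃ p ∈ S, p i = a i) ∧
      (b i = u i ∨ ∃ p ∈ S, p i = b i) := fun i =>
  ⟨lower_eq_or_exists_coord_eq_of_maximal S l a b hBl hempty
      (fun a' hla' ha'a ha' => hmax a' b hla' hBu ha'a (fun _ => le_rfl) (Or.inl ha')) i,
    upper_eq_or_exists_coord_eq_of_maximal S a b u hBu hempty
      (fun b' hb'u hbb' hb' => hmax a b' hBl hb'u (fun _ => le_rfl) hbb' (Or.inr hb')) i⟩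

theorem maximal_empty_box_coordinates
    {n : ℕ} (S : Finset (Fin n → ℝ)) (l u a b : Fin n → ℝ)
    (hlu : ∀ i, l i < u i) (hab : ∀ i, a i < b i)
    -- S lies in the interior of D = [l, u]:
    (hS : ∀ p ∈ S, ∀ i, l i < p i ∧ p i < u i)
    -- B = [a, b] is contained in D:
    (hBl : ∀ i, l i ≤ a i) (hBu : ∀ i, b i ≤ u i)
    -- the interior of B contains no point of S:
    (hempty : ¬ ∃ p ∈ S, ∀ i, a i < p i ∧ p i < b i)
    -- maximality: any strictly larger box inside D has a point of S in its interior: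
    (hmax : ∀ a' b' : Fin n → ℝ, (∀ i, l i ≤ a' i) → (∀ i, b' i ≤ u i) →
        (∀ i, a' i ≤ a i) → (∀ i, b i ≤ b' i) → (a' ≠ a ∨ b' ≠ b) →
        ∃ p ∈ S, ∀ i, a' i < p i ∧ p i < b' i) :
    ∀ i : Fin n, (a i = l i ∨ ∃ p ∈ S, p i = a i) ∧
      (b i = u i ∨ ∃ p ∈ S, p i = b i) :=
  maximal_empty_box_coordinates_general S l u a b hBl hBu hempty hmax
end

section
/- Hardness reduction correctness: for a binary database D ⊆ 2^V, set s = t/|D| and c = 1/|D| with t ≤ |D| and D nonempty. Then a pair (X, Z) with X ⊆ Z ⊆ V is an irredundant association rule (X minimal and Z maximal satisfying |S_D(Z)| ≥ s|D| and |S_D(X)| ≤ |S_D(Z)|/c) if and only if X = ∅ and Z is a maximal t-frequent set. -/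
/-! With `c = 1/|D|` the confidence condition only asks that `Z` be supported at all, and with
`s = t/|D|` the support condition says that `Z` is `t`-frequent. Hence, for `t ≥ 1`, whether
`(X, Z)` is a rule does not depend on `X`: the minimal antecedent is `∅`, and the maximal
consequents are exactly the maximal `t`-frequent sets. -/

open Finset

/-- Support of an itemset `X` in a binary database `D`. -/
def binSupp {V : Type*} [DecidableEq V] (D : Finset (Finset V)) (X : Finset V) : ℕ :=
  (D.filter fun T => X ⊆ T).card

/-- The rule predicate: `X ⊆ Z`, `Z` has support at least `s·|D|`, and the
confidence condition `c·|S_D(X)| ≤ |S_D(Z)|` holds. -/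
def RulePred {V : Type*} [DecidableEq V] (D : Finset (Finset V)) (s c : ℝ)
    (X Z : Finset V) : Prop :=
  X ⊆ Z ∧ s * (D.card : ℝ) ≤ (binSupp D Z : ℝ) ∧
    c * (binSupp D X : ℝ) ≤ (binSupp D Z : ℝ)

section

variable {V : Type*} [DecidableEq V] (D : Finset (Finset V))

theorem binSupp_le_card (X : Finset V) : binSupp D X ≤ D.card :=
  card_filter_le _ _

theorem one_div_card_mul_binSupp_le_one (X : Finset V) : 1 / (D.card : ℝ) * binSupp D X ≤ 1 := by
  rw [one_div_mul_eq_div]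
  exact div_le_one_of_le₀ (mod_cast binSupp_le_card D X) (Nat.cast_nonneg _)

theorem rulePred_iff_le_binSupp {D} (hD : D.Nonempty) {t : ℕ} (ht : 1 ≤ t) {X Z : Finset V}
    (hXZ : X ⊆ Z) :
    RulePred D (t / D.card) (1 / D.card) X Z ↔ t ≤ binSupp D Z := by
  have hsupp : (t / D.card : ℝ) * D.card = t :=
    div_mul_cancel₀ _ (mod_cast hD.card_pos.ne')
  simp only [RulePred, hsupp, Nat.cast_le, hXZ, true_and, and_iff_left_iff_imp]
  intro hZ
  calc 1 / (D.card : ℝ) * binSupp D X ≤ 1 := one_div_card_mul_binSupp_le_one D X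
    _ ≤ binSupp D Z := mod_cast ht.trans hZ

end

theorem irredundant_rules_are_maximal_frequent_sets_general
    {V : Type*} [DecidableEq V]
    (D : Finset (Finset V)) (hD : D.Nonempty)
    (t : ℕ) (ht1 : 1 ≤ t)
    (s c : ℝ) (hs : s = (t : ℝ) / (D.card : ℝ)) (hc : c = 1 / (D.card : ℝ))
    (X Z : Finset V) (hXZ : X ⊆ Z) :
    (RulePred D s c X Z ∧ (∀ X' ⊂ X, ¬ RulePred D s c X' Z) ∧
        (∀ Z', Z ⊂ Z' → ¬ RulePred D s c X Z')) ↔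
      (X = ∅ ∧ t ≤ binSupp D Z ∧ ∀ Z', Z ⊂ Z' → binSupp D Z' < t) := by
  subst hs hc
  have rule_iff {X' Z' : Finset V} (h : X' ⊆ Z') := rulePred_iff_le_binSupp hD ht1 h
  rw [rule_iff hXZ]
  constructor
  · rintro ⟨hZ, hXmin, hZmax⟩
    refine ⟨?_, hZ, fun Z' hZZ' => ?_⟩
    · by_contra hX
      exact hXmin ∅ (empty_ssubset.mpr (nonempty_iff_ne_empty.mpr hX))
        ((rule_iff (empty_subset Z)).mpr hZ)
    · exact not_le.mp (mt (rule_iff (hXZ.trans hZZ'.subset)).mpr (hZmax Z' hZZ'))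
  · rintro ⟨rfl, hZ, hZmax⟩
    refine ⟨hZ, fun X' hX' => absurd hX' (not_ssubset_empty X'), fun Z' hZZ' => ?_⟩
    exact mt (rule_iff (hXZ.trans hZZ'.subset)).mp (not_le.mpr (hZmax Z' hZZ'))

theorem irredundant_rules_are_maximal_frequent_sets
    {V : Type*} [Fintype V] [DecidableEq V]
    (D : Finset (Finset V)) (hD : D.Nonempty)
    (t : ℕ) (ht1 : 1 ≤ t) (htD : t ≤ D.card)
    (s c : ℝ) (hs : s = (t : ℝ) / (D.card : ℝ)) (hc : c = 1 / (D.card : ℝ))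
    (X Z : Finset V) (hXZ : X ⊆ Z) :
    (RulePred D s c X Z ∧ (∀ X' ⊂ X, ¬ RulePred D s c X' Z) ∧
        (∀ Z', Z ⊂ Z' → ¬ RulePred D s c X Z')) ↔
      (X = ∅ ∧ t ≤ binSupp D Z ∧ ∀ Z', Z ⊂ Z' → binSupp D Z' < t) :=
  irredundant_rules_are_maximal_frequent_sets_general D hD t ht1 s c hs hc X Z hXZ
end
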